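/- arXiv:2602.16439 — 5 statements merged into one kernel-verified Lean document; each statement's English description precedes it below -/
import Mathlib

section
/- Let T > 0, let q ∈ (0,1) and C > 0, and let (f_n)_{n∈ℕ} be a sequence of continuous non-negative real-valued functions on [0,T] satisfying, for every n ∈ ℕ and every t ∈ [0,T], the recursive inequality f_{n+1}(t) ≤ q·f_n(t) + C·∫₀^t f_n(τ) dτ. Then the series Σ_{n=0}^∞ f_n(t) converges uniformly on [0,T] (i.e., the sequence of partial-sum functions converges uniformly on [0,T]). -/
/-!
Since `∫₀ᵗ e^{Lτ} dτ ≤ e^{Lt} / L`, the recursion propagates a bound `f₀(t) ≤ M e^{Lt}` to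
`f_n(t) ≤ M (q + C/L)^n e^{Lt}`. Choosing `L = 2C/(1-q)` makes the ratio `q + C/L = (1+q)/2 < 1`,
so the series is dominated by a geometric one and the Weierstrass M-test applies.
-/

open Real Set intervalIntegral

lemma integral_exp_mul_le_exp_mul_div {L : ℝ} (hL : 0 < L) (t : ℝ) :
    ∫ τ in (0 : ℝ)..t, exp (L * τ) ≤ exp (L * t) / L := by
  have h : ∫ τ in (0 : ℝ)..t, exp (L * τ) = (exp (L * t) - 1) / L := by
    rw [integral_comp_mul_left exp hL.ne', integral_exp, mul_zero, exp_zero, smul_eq_mul,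
      inv_mul_eq_div]
  rw [h]
  gcongr
  linarith

lemma le_mul_pow_mul_exp_of_le_mul_add_integral {T q C L M : ℝ} {f : ℕ → ℝ → ℝ}
    (hq : 0 ≤ q) (hC : 0 ≤ C) (hL : 0 < L) (hM : 0 ≤ M)
    (hcont : ∀ n, ContinuousOn (f n) (Icc 0 T))
    (hf₀ : ∀ t ∈ Icc 0 T, f 0 t ≤ M * exp (L * t))
    (hrec : ∀ n, ∀ t ∈ Icc 0 T, f (n + 1) t ≤ q * f n t + C * ∫ τ in (0 : ℝ)..t, f n τ) :
    ∀ n, ∀ t ∈ Icc 0 T, f n t ≤ M * (q + C / L) ^ n * exp (L * t) := by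
  intro n
  induction n with
  | zero => simpa using hf₀
  | succ n ih =>
    intro t ht
    have hsub : uIcc 0 t ⊆ Icc 0 T := by
      rw [uIcc_of_le ht.1]
      exact Icc_subset_Icc_right ht.2
    have hintegral : ∫ τ in (0 : ℝ)..t, f n τ ≤ M * (q + C / L) ^ n * (exp (L * t) / L) :=
      calc ∫ τ in (0 : ℝ)..t, f n τ
          ≤ ∫ τ in (0 : ℝ)..t, M * (q + C / L) ^ n * exp (L * τ) :=
            integral_mono_on ht.1 ((hcont n).mono hsub).intervalIntegrable
              (Continuous.intervalIntegrable (by fun_prop) _ _)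
              fun τ hτ => ih τ ⟨hτ.1, hτ.2.trans ht.2⟩
        _ ≤ M * (q + C / L) ^ n * (exp (L * t) / L) := by
            rw [intervalIntegral.integral_const_mul]
            gcongr
            exact integral_exp_mul_le_exp_mul_div hL t
    calc f (n + 1) t ≤ q * f n t + C * ∫ τ in (0 : ℝ)..t, f n τ := hrec n t ht
      _ ≤ q * (M * (q + C / L) ^ n * exp (L * t))
          + C * (M * (q + C / L) ^ n * (exp (L * t) / L)) := by
        gcongr
        exact ih t ht
      _ = M * (q + C / L) ^ (n + 1) * exp (L * t) := by ring

/-- Lemma 4.2 of the paper: a recursive inequality `f_{n+1}(t) ≤ q f_n(t) + C ∫₀ᵗ f_n`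
with `0 < q < 1` implies uniform convergence of `∑ f_n` on `[0,T]`. -/
theorem recursive_inequality_uniform_convergence
    (T : ℝ) (hT : 0 < T) (q C : ℝ) (hq : q ∈ Set.Ioo (0 : ℝ) 1) (hC : 0 < C)
    (f : ℕ → ℝ → ℝ)
    (hcont : ∀ n, ContinuousOn (f n) (Set.Icc 0 T))
    (hnonneg : ∀ n, ∀ t ∈ Set.Icc (0 : ℝ) T, 0 ≤ f n t)
    (hrec : ∀ n, ∀ t ∈ Set.Icc (0 : ℝ) T,
      f (n + 1) t ≤ q * f n t + C * ∫ τ in (0 : ℝ)..t, f n τ) :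
    ∃ g : ℝ → ℝ, TendstoUniformlyOn
      (fun N t => ∑ n ∈ Finset.range N, f n t) g Filter.atTop (Set.Icc 0 T) := by
  obtain ⟨hq₀, hq₁⟩ := hq
  have hq₁' : 0 < 1 - q := by linarith
  set L := 2 * C / (1 - q)
  have hL : 0 < L := by positivity
  have hratio : q + C / L = (1 + q) / 2 := by
    simp only [L]
    field_simp
    ring
  obtain ⟨M, hM⟩ := isCompact_Icc.exists_bound_of_continuousOn (hcont 0)
  have hM₀ : 0 ≤ M := (norm_nonneg _).trans (hM 0 ⟨le_rfl, hT.le⟩)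
  have hf₀ : ∀ t ∈ Icc 0 T, f 0 t ≤ M * exp (L * t) := fun t ht =>
    (le_abs_self _).trans <| (hM t ht).trans <|
      le_mul_of_one_le_right hM₀ (one_le_exp (mul_nonneg hL.le ht.1))
  have hbound := le_mul_pow_mul_exp_of_le_mul_add_integral hq₀.le hC.le hL hM₀ hcont hf₀ hrec
  have hsummable : Summable fun n => M * exp (L * T) * ((1 + q) / 2) ^ n :=
    (summable_geometric_of_lt_one (by positivity) (by linarith)).mul_left _
  refine ⟨_, tendstoUniformlyOn_tsum_nat hsummable fun n t ht => ?_⟩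
  rw [norm_eq_abs, abs_of_nonneg (hnonneg n t ht)]
  calc f n t ≤ M * (q + C / L) ^ n * exp (L * t) := hbound n t ht
    _ ≤ M * exp (L * T) * ((1 + q) / 2) ^ n := by
      rw [hratio, mul_right_comm]
      gcongr
      exact ht.2
end

section
/- Let T > 0 and C > 0, let (f_n)_{n∈ℕ} be a sequence of continuous non-negative real-valued functions on [0,T], and let (α_n)_{n∈ℕ} be a sequence of non-negative real numbers such that Σ_{n=0}^∞ α_n converges. Assume that for every n ∈ ℕ and every t ∈ [0,T], f_{n+1}(t) ≤ C·∫₀^t f_n(τ) dτ + α_n. Then the series Σ_{n=0}^∞ f_n(t) converges uniformly on [0,T]. -/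
/-!
Work with the Bielecki weighted norm `u n = sup_{t ∈ [0,T]} e^{-2Ct} f n t`. Since
`C ∫₀ᵗ e^{2Cτ} dτ ≤ e^{2Ct} / 2`, the recursive inequality becomes `u (n+1) ≤ u n / 2 + α n`,
which forces `∑ u n < ∞`. As `f n t ≤ e^{2CT} u n` on `[0,T]`, the Weierstrass M-test concludes.
-/

open Real Set

theorem summable_of_le_mul_add {u α : ℕ → ℝ} {q : ℝ} (hu : ∀ n, 0 ≤ u n) (hq₀ : 0 ≤ q)
    (hq : q < 1) (hα : ∀ n, 0 ≤ α n) (hαsum : Summable α)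
    (hrec : ∀ n, u (n + 1) ≤ q * u n + α n) : Summable u := by
  refine summable_of_sum_range_le hu (c := (u 0 + ∑' n, α n) / (1 - q)) fun N => ?_
  rw [le_div_iff₀ (sub_pos.2 hq)]
  have hshift : ∑ n ∈ Finset.range N, u (n + 1) ≤ q * ∑ n ∈ Finset.range N, u n
      + ∑ n ∈ Finset.range N, α n := by
    rw [Finset.mul_sum, ← Finset.sum_add_distrib]
    exact Finset.sum_le_sum fun n _ => hrec n
  have hmono : ∑ n ∈ Finset.range N, u n ≤ ∑ n ∈ Finset.range (N + 1), u n :=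
    Finset.sum_le_sum_of_subset_of_nonneg (Finset.range_subset_range.2 N.le_succ)
      fun n _ _ => hu n
  have hαle := hαsum.sum_le_tsum (Finset.range N) fun n _ => hα n
  have hsucc := Finset.sum_range_succ' u N
  have hqmono := mul_le_mul_of_nonneg_left hmono hq₀
  linarith

theorem integral_exp_mul {c : ℝ} (hc : c ≠ 0) (t : ℝ) :
    ∫ τ in (0 : ℝ)..t, exp (c * τ) = (exp (c * t) - 1) / c := by
  rw [intervalIntegral.integral_comp_mul_left exp hc, integral_exp, mul_zero, exp_zero,
    smul_eq_mul, inv_mul_eq_div]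

-- Without absolute values: it is only a norm on functions that are non-negative on `[0,T]`.
noncomputable def expWeightedSup (c T : ℝ) (g : ℝ → ℝ) : ℝ :=
  sSup ((fun t => exp (-(c * t)) * g t) '' Icc 0 T)

section expWeightedSup

variable {c T : ℝ} {g h : ℝ → ℝ}

theorem exp_mul_le_expWeightedSup (hg : ContinuousOn g (Icc 0 T)) {t : ℝ} (ht : t ∈ Icc 0 T) :
    exp (-(c * t)) * g t ≤ expWeightedSup c T g :=
  le_csSup (isCompact_Icc.image_of_continuousOn (by fun_prop)).bddAbove (mem_image_of_mem _ ht)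

theorem le_exp_mul_expWeightedSup (hg : ContinuousOn g (Icc 0 T)) {t : ℝ} (ht : t ∈ Icc 0 T) :
    g t ≤ exp (c * t) * expWeightedSup c T g := by
  have := mul_le_mul_of_nonneg_left (exp_mul_le_expWeightedSup (c := c) hg ht) (exp_pos (c * t)).le
  rwa [← mul_assoc, ← exp_add, add_neg_cancel, exp_zero, one_mul] at this

theorem expWeightedSup_nonneg (hg : ∀ t ∈ Icc 0 T, 0 ≤ g t) : 0 ≤ expWeightedSup c T g :=
  Real.sSup_nonneg <| forall_mem_image.2 fun t ht => mul_nonneg (exp_pos _).le (hg t ht)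

theorem expWeightedSup_le {a : ℝ} (ha : 0 ≤ a) (h : ∀ t ∈ Icc 0 T, exp (-(c * t)) * g t ≤ a) :
    expWeightedSup c T g ≤ a :=
  Real.sSup_le (forall_mem_image.2 h) ha

theorem integral_le_expWeightedSup (hc : 0 < c) (hg : ContinuousOn g (Icc 0 T)) {t : ℝ}
    (ht : t ∈ Icc 0 T) :
    ∫ τ in (0 : ℝ)..t, g τ ≤ expWeightedSup c T g * ((exp (c * t) - 1) / c) := by
  have hsub : Icc 0 t ⊆ Icc 0 T := Icc_subset_Icc le_rfl ht.2
  calc ∫ τ in (0 : ℝ)..t, g τ ≤ ∫ τ in (0 : ℝ)..t, expWeightedSup c T g * exp (c * τ) := by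
        refine intervalIntegral.integral_mono_on ht.1 ?_
          ((continuous_const.mul (by fun_prop)).intervalIntegrable _ _) fun τ hτ => ?_
        · exact (hg.mono (uIcc_of_le ht.1 ▸ hsub)).intervalIntegrable
        · rw [mul_comm]; exact le_exp_mul_expWeightedSup hg (hsub hτ)
    _ = _ := by rw [intervalIntegral.integral_const_mul, integral_exp_mul hc.ne']

theorem expWeightedSup_le_of_le_integral {C a : ℝ} (hc : 0 < c) (hC : 0 ≤ C) (ha : 0 ≤ a)
    (hg : ContinuousOn g (Icc 0 T)) (hg₀ : ∀ t ∈ Icc 0 T, 0 ≤ g t)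
    (hh : ∀ t ∈ Icc 0 T, h t ≤ C * (∫ τ in (0 : ℝ)..t, g τ) + a) :
    expWeightedSup c T h ≤ C / c * expWeightedSup c T g + a := by
  have hW := expWeightedSup_nonneg (c := c) hg₀
  refine expWeightedSup_le (by positivity) fun t ht => ?_
  have hint := integral_le_expWeightedSup hc hg ht
  have hprod : exp (-(c * t)) * exp (c * t) = 1 := by rw [← exp_add, neg_add_cancel, exp_zero]
  have hexp : exp (-(c * t)) ≤ 1 := exp_le_one_iff.2 (by nlinarith [ht.1])
  calc exp (-(c * t)) * h t
      ≤ exp (-(c * t)) * (C * (expWeightedSup c T g * ((exp (c * t) - 1) / c)) + a) := by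
        gcongr
        exact (hh t ht).trans (by gcongr)
    _ = C / c * expWeightedSup c T g * (1 - exp (-(c * t))) + exp (-(c * t)) * a := by
        field_simp
        linear_combination (C * expWeightedSup c T g) * hprod
    _ ≤ C / c * expWeightedSup c T g + a := by
        nlinarith [exp_pos (-(c * t)), mul_nonneg (div_nonneg hC hc.le) hW]

end expWeightedSup

theorem recursive_inequality_with_tail_uniform_convergence_general
    (T : ℝ) (C : ℝ) (hC : 0 < C)
    (f : ℕ → ℝ → ℝ) (α : ℕ → ℝ)
    (hcont : ∀ n, ContinuousOn (f n) (Set.Icc 0 T))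
    (hnonneg : ∀ n, ∀ t ∈ Set.Icc (0 : ℝ) T, 0 ≤ f n t)
    (hα : ∀ n, 0 ≤ α n) (hαsum : Summable α)
    (hrec : ∀ n, ∀ t ∈ Set.Icc (0 : ℝ) T,
      f (n + 1) t ≤ C * (∫ τ in (0 : ℝ)..t, f n τ) + α n) :
    ∃ g : ℝ → ℝ, TendstoUniformlyOn
      (fun N t => ∑ n ∈ Finset.range N, f n t) g Filter.atTop (Set.Icc 0 T) := by
  set u : ℕ → ℝ := fun n => expWeightedSup (2 * C) T (f n)
  have hu : ∀ n, 0 ≤ u n := fun n => expWeightedSup_nonneg (hnonneg n)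
  have hurec : ∀ n, u (n + 1) ≤ 1 / 2 * u n + α n := fun n => by
    have := expWeightedSup_le_of_le_integral (c := 2 * C) (by positivity) hC.le (hα n)
      (hcont n) (hnonneg n) (hrec n)
    rwa [div_mul_cancel_right₀ hC.ne', ← one_div] at this
  have husum : Summable u := summable_of_le_mul_add hu (by norm_num) (by norm_num) hα hαsum hurec
  refine ⟨_, tendstoUniformlyOn_tsum_nat (husum.mul_left (exp (2 * C * T))) fun n t ht => ?_⟩
  rw [Real.norm_of_nonneg (hnonneg n t ht)]
  calc f n t ≤ exp (2 * C * t) * u n := le_exp_mul_expWeightedSup (hcont n) ht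
    _ ≤ exp (2 * C * T) * u n := by gcongr; exacts [hu n, ht.2]

/-- Lemma 4.3 of the paper: `f_{n+1}(t) ≤ C ∫₀ᵗ f_n + α_n` with `∑ α_n < ∞`
implies uniform convergence of `∑ f_n` on `[0,T]`. -/
theorem recursive_inequality_with_tail_uniform_convergence
    (T : ℝ) (hT : 0 < T) (C : ℝ) (hC : 0 < C)
    (f : ℕ → ℝ → ℝ) (α : ℕ → ℝ)
    (hcont : ∀ n, ContinuousOn (f n) (Set.Icc 0 T))
    (hnonneg : ∀ n, ∀ t ∈ Set.Icc (0 : ℝ) T, 0 ≤ f n t)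
    (hα : ∀ n, 0 ≤ α n) (hαsum : Summable α)
    (hrec : ∀ n, ∀ t ∈ Set.Icc (0 : ℝ) T,
      f (n + 1) t ≤ C * (∫ τ in (0 : ℝ)..t, f n τ) + α n) :
    ∃ g : ℝ → ℝ, TendstoUniformlyOn
      (fun N t => ∑ n ∈ Finset.range N, f n t) g Filter.atTop (Set.Icc 0 T) :=
  recursive_inequality_with_tail_uniform_convergence_general T C hC f α hcont hnonneg hα hαsum hrec
end

section
/- Let M₀ ≥ 0, q ≥ 0, C ≥ 0, and define a sequence of functions g_n : ℝ → ℝ (n ∈ ℕ) by g₀(t) = M₀ and g_{n+1}(t) = q·g_n(t) + C·∫₀^t g_n(τ) dτ. Then for every n ∈ ℕ and every t ≥ 0, g_n(t) = M₀ · Σ_{k=0}^{n} binom(n,k) · q^{n−k} · (C·t)^k / k!. -/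
/-!
Write `T f t = q f t + C ∫₀ᵗ f`, so that `g n = M₀ • Tⁿ 1`. Since `C ∫₀ᵗ (Cτ)ᵏ/k! = (Ct)ᵏ⁺¹/(k+1)!`,
`T` acts on the exponential monomials `(Ct)ᵏ/k!` like the binomial `q + X` on `Xᵏ`, and Pascal's rule
turns `Tⁿ 1` into the binomial sum `∑ₖ C(n,k) qⁿ⁻ᵏ (Ct)ᵏ/k!`.
-/

open Finset Nat intervalIntegral

noncomputable def binomialExpSum (q C : ℝ) (n : ℕ) (t : ℝ) : ℝ :=
  ∑ k ∈ range (n + 1), (n.choose k : ℝ) * q ^ (n - k) * (C * t) ^ k / (k ! : ℝ)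

theorem mul_integral_mul_pow_div_factorial (C t : ℝ) (k : ℕ) :
    C * ∫ τ in (0 : ℝ)..t, (C * τ) ^ k / (k ! : ℝ) = (C * t) ^ (k + 1) / ((k + 1) ! : ℝ) := by
  simp only [mul_pow, mul_div_assoc, integral_const_mul,
    integral_div, integral_pow]
  push_cast [Nat.factorial_succ]
  field_simp
  ring

theorem mul_integral_binomialExpSum (q C t : ℝ) (n : ℕ) :
    C * ∫ τ in (0 : ℝ)..t, binomialExpSum q C n τ =
      ∑ k ∈ range (n + 1), (n.choose k : ℝ) * q ^ (n - k) * ((C * t) ^ (k + 1) / ((k + 1) ! : ℝ)) := by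
  unfold binomialExpSum
  rw [intervalIntegral.integral_finsetSum fun k _ =>
    (by fun_prop : Continuous _).intervalIntegrable _ _, mul_sum]
  refine sum_congr rfl fun k _ => ?_
  simp only [mul_div_assoc, integral_const_mul]
  rw [← mul_integral_mul_pow_div_factorial]
  ring

theorem binomialExpSum_succ (q C t : ℝ) (n : ℕ) :
    binomialExpSum q C (n + 1) t =
      q * binomialExpSum q C n t + C * ∫ τ in (0 : ℝ)..t, binomialExpSum q C n τ := by
  have pascal := sum_choose_succ_mul (fun i j => q ^ j * ((C * t) ^ i / (i ! : ℝ))) n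
  rw [mul_integral_binomialExpSum, binomialExpSum, binomialExpSum, mul_sum]
  refine ((sum_congr rfl fun k _ => by ring).trans pascal).trans ?_
  congr 1 <;> refine sum_congr rfl fun k hk => ?_
  · rw [Nat.sub_add_comm (mem_range_succ_iff.mp hk), pow_succ]
    ring
  · ring

theorem majorant_sequence_closed_form_general
    (M₀ q C : ℝ)
    (g : ℕ → ℝ → ℝ)
    (hg0 : ∀ t : ℝ, g 0 t = M₀)
    (hgrec : ∀ n, ∀ t : ℝ, g (n + 1) t = q * g n t + C * ∫ τ in (0 : ℝ)..t, g n τ) :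
    ∀ n : ℕ, ∀ t : ℝ, 0 ≤ t →
      g n t = M₀ * ∑ k ∈ Finset.range (n + 1),
        (n.choose k : ℝ) * q ^ (n - k) * (C * t) ^ k / (Nat.factorial k : ℝ) := by
  suffices h : ∀ n, g n = fun t => M₀ * binomialExpSum q C n t from fun n t _ => congrFun (h n) t
  intro n
  induction n with
  | zero => funext t; simp [hg0, binomialExpSum]
  | succ n ih =>
    funext t
    rw [hgrec, ih, binomialExpSum_succ, integral_const_mul]
    ring

/-- Closed-form solution of the linear recurrence `g_{n+1}(t) = q g_n(t) + C ∫₀ᵗ g_n`,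
`g₀ ≡ M₀`, derived via generating functions in the proof of Lemma 4.2 of the paper. -/
theorem majorant_sequence_closed_form
    (M₀ q C : ℝ) (hM : 0 ≤ M₀) (hq : 0 ≤ q) (hC : 0 ≤ C)
    (g : ℕ → ℝ → ℝ)
    (hg0 : ∀ t : ℝ, g 0 t = M₀)
    (hgrec : ∀ n, ∀ t : ℝ, g (n + 1) t = q * g n t + C * ∫ τ in (0 : ℝ)..t, g n τ) :
    ∀ n : ℕ, ∀ t : ℝ, 0 ≤ t →
      g n t = M₀ * ∑ k ∈ Finset.range (n + 1),
        (n.choose k : ℝ) * q ^ (n - k) * (C * t) ^ k / (Nat.factorial k : ℝ) :=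
  majorant_sequence_closed_form_general M₀ q C g hg0 hgrec
end

section
/- Let T > 0 and C ≥ 0, let (f_n)_{n∈ℕ} be a sequence of continuous non-negative real-valued functions on [0,T], and let (α_n)_{n∈ℕ} be non-negative real numbers. Assume that for every n ∈ ℕ and every t ∈ [0,T], f_{n+1}(t) ≤ C·∫₀^t f_n(τ) dτ + α_n. Set M₀ = max_{t∈[0,T]} f₀(t). Then for every n ≥ 1 and every t ∈ [0,T], f_n(t) ≤ M₀·(C·t)^n/n! + Σ_{k=0}^{n−1} α_k · (C·t)^{n−1−k}/(n−1−k)!. -/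
/-!
Let `M₀ = sup f₀` and let `u n t` be the right-hand side of the bound, with `u 0 = M₀`. The
majorants satisfy the recursion of the `f n` with equality, `u (n+1) t = C ∫₀ᵗ u n + αₙ`,
because `C ∫₀ᵗ (Cτ)ᵐ/m! dτ = (Ct)ᵐ⁺¹/(m+1)!`. As `C ≥ 0`, the map `g ↦ C ∫₀ᵗ g + αₙ` is
monotone, so `f 0 ≤ u 0` propagates to `f n ≤ u n` by induction on `n`.
-/

open Set intervalIntegral

open scoped Nat

lemma mul_integral_pow_div_factorial (C t : ℝ) (m : ℕ) :
    C * ∫ τ in (0 : ℝ)..t, (C * τ) ^ m / (m ! : ℝ) = (C * t) ^ (m + 1) / ((m + 1) ! : ℝ) := by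
  have h : ∀ τ : ℝ, (C * τ) ^ m / (m ! : ℝ) = C ^ m / (m ! : ℝ) * τ ^ m := fun τ => by ring
  simp_rw [h, integral_const_mul, integral_pow]
  rw [Nat.factorial_succ]
  push_cast
  field_simp
  ring

lemma le_of_integral_recursion {T C : ℝ} (hC : 0 ≤ C) {f u : ℕ → ℝ → ℝ} {α : ℕ → ℝ}
    (hf : ∀ n, ContinuousOn (f n) (Icc 0 T)) (hu : ∀ n, ContinuousOn (u n) (Icc 0 T))
    (hf_rec : ∀ n, ∀ t ∈ Icc (0 : ℝ) T, f (n + 1) t ≤ C * (∫ τ in (0 : ℝ)..t, f n τ) + α n)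
    (hu_rec : ∀ n, ∀ t ∈ Icc (0 : ℝ) T, C * (∫ τ in (0 : ℝ)..t, u n τ) + α n ≤ u (n + 1) t)
    (h₀ : ∀ t ∈ Icc (0 : ℝ) T, f 0 t ≤ u 0 t) :
    ∀ n, ∀ t ∈ Icc (0 : ℝ) T, f n t ≤ u n t := by
  intro n
  induction n with
  | zero => exact h₀
  | succ n ih =>
    intro t ⟨ht₀, htT⟩
    have hsub : uIcc 0 t ⊆ Icc 0 T := by
      rw [uIcc_of_le ht₀]
      exact Icc_subset_Icc_right htT
    have hint : ∫ τ in (0 : ℝ)..t, f n τ ≤ ∫ τ in (0 : ℝ)..t, u n τ :=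
      integral_mono_on ht₀ ((hf n).mono hsub).intervalIntegrable
        ((hu n).mono hsub).intervalIntegrable
        fun τ ⟨hτ₀, hτt⟩ => ih τ ⟨hτ₀, hτt.trans htT⟩
    calc f (n + 1) t ≤ C * (∫ τ in (0 : ℝ)..t, f n τ) + α n := hf_rec n t ⟨ht₀, htT⟩
      _ ≤ C * (∫ τ in (0 : ℝ)..t, u n τ) + α n := by gcongr
      _ ≤ u (n + 1) t := hu_rec n t ⟨ht₀, htT⟩

noncomputable def picardMajorant (M C : ℝ) (α : ℕ → ℝ) (n : ℕ) (t : ℝ) : ℝ :=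
  M * (C * t) ^ n / (n ! : ℝ) +
    ∑ k ∈ Finset.range n, α k * (C * t) ^ (n - 1 - k) / ((n - 1 - k) ! : ℝ)

lemma continuous_picardMajorant (M C : ℝ) (α : ℕ → ℝ) (n : ℕ) :
    Continuous (picardMajorant M C α n) := by
  unfold picardMajorant
  fun_prop

lemma picardMajorant_succ (M C : ℝ) (α : ℕ → ℝ) (n : ℕ) (t : ℝ) :
    picardMajorant M C α (n + 1) t =
      C * (∫ τ in (0 : ℝ)..t, picardMajorant M C α n τ) + α n := by
  have hterm : ∀ (a : ℝ) (m : ℕ), C * (∫ τ in (0 : ℝ)..t, a * (C * τ) ^ m / (m ! : ℝ)) =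
      a * ((C * t) ^ (m + 1) / ((m + 1) ! : ℝ)) := fun a m => by
    simp_rw [mul_div_assoc, integral_const_mul, ← mul_integral_pow_div_factorial]
    ring
  have hii : ∀ g : ℝ → ℝ, Continuous g → IntervalIntegrable g MeasureTheory.volume 0 t :=
    fun g hg => hg.intervalIntegrable 0 t
  unfold picardMajorant
  rw [integral_add (hii _ (by fun_prop)) (hii _ (by fun_prop)),
    integral_finsetSum (fun _ _ => hii _ (by fun_prop)),
    mul_add, Finset.mul_sum, hterm, Finset.sum_range_succ, Nat.add_sub_cancel, Nat.sub_self]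
  have hsum : ∀ k ∈ Finset.range n,
      α k * (C * t) ^ (n - k) / ((n - k) ! : ℝ) =
        C * ∫ τ in (0 : ℝ)..t, α k * (C * τ) ^ (n - 1 - k) / ((n - 1 - k) ! : ℝ) := by
    intro k hk
    rw [hterm, show n - 1 - k + 1 = n - k by grind]
    ring
  rw [Finset.sum_congr rfl hsum]
  simp only [pow_zero, Nat.factorial_zero, Nat.cast_one]
  ring

theorem inductive_pointwise_bound_general
    (T C : ℝ) (hC : 0 ≤ C)
    (f : ℕ → ℝ → ℝ) (α : ℕ → ℝ)
    (hcont : ∀ n, ContinuousOn (f n) (Set.Icc 0 T))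
    (hrec : ∀ n, ∀ t ∈ Set.Icc (0 : ℝ) T,
      f (n + 1) t ≤ C * (∫ τ in (0 : ℝ)..t, f n τ) + α n) :
    ∀ n : ℕ, 1 ≤ n → ∀ t ∈ Set.Icc (0 : ℝ) T,
      f n t ≤ sSup ((f 0) '' Set.Icc 0 T) * (C * t) ^ n / (Nat.factorial n : ℝ)
        + ∑ k ∈ Finset.range n,
            α k * (C * t) ^ (n - 1 - k) / (Nat.factorial (n - 1 - k) : ℝ) := by
  set M := sSup ((f 0) '' Set.Icc 0 T)
  have hf₀ : ∀ t ∈ Icc (0 : ℝ) T, f 0 t ≤ picardMajorant M C α 0 t := fun t ht => by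
    simpa [picardMajorant] using
      le_csSup (isCompact_Icc.image_of_continuousOn (hcont 0)).bddAbove (mem_image_of_mem _ ht)
  intro n _
  exact le_of_integral_recursion hC hcont
    (fun n => (continuous_picardMajorant M C α n).continuousOn)
    hrec (fun n t _ => (picardMajorant_succ M C α n t).ge) hf₀ n

/-- The inductive pointwise bound from the proof of Lemma 4.3 of the paper:
`f_n(t) ≤ M₀ (Ct)^n/n! + ∑_{k<n} α_k (Ct)^{n-1-k}/(n-1-k)!` for `n ≥ 1`. -/
theorem inductive_pointwise_bound
    (T C : ℝ) (hT : 0 < T) (hC : 0 ≤ C)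
    (f : ℕ → ℝ → ℝ) (α : ℕ → ℝ)
    (hcont : ∀ n, ContinuousOn (f n) (Set.Icc 0 T))
    (hnonneg : ∀ n, ∀ t ∈ Set.Icc (0 : ℝ) T, 0 ≤ f n t)
    (hα : ∀ n, 0 ≤ α n)
    (hrec : ∀ n, ∀ t ∈ Set.Icc (0 : ℝ) T,
      f (n + 1) t ≤ C * (∫ τ in (0 : ℝ)..t, f n τ) + α n) :
    ∀ n : ℕ, 1 ≤ n → ∀ t ∈ Set.Icc (0 : ℝ) T,
      f n t ≤ sSup ((f 0) '' Set.Icc 0 T) * (C * t) ^ n / (Nat.factorial n : ℝ)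
        + ∑ k ∈ Finset.range n,
            α k * (C * t) ^ (n - 1 - k) / (Nat.factorial (n - 1 - k) : ℝ) :=
  inductive_pointwise_bound_general T C hC f α hcont hrec
end

section
/- Let T > 0 and C ≥ 0, let (f_n)_{n∈ℕ} be a sequence of continuous non-negative real-valued functions on [0,T], and let (α_n)_{n∈ℕ} be non-negative real numbers with Σ_{n=0}^∞ α_n < ∞. Assume that for every n ∈ ℕ and every t ∈ [0,T], f_{n+1}(t) ≤ C·∫₀^t f_n(τ) dτ + α_n. Set M₀ = max_{t∈[0,T]} f₀(t). Then the sequence n ↦ max_{t∈[0,T]} f_n(t) is summable and Σ_{n=0}^{∞} max_{t∈[0,T]} f_n(t) ≤ M₀·e^{C·T} + e^{C·T}·Σ_{k=0}^{∞} α_k. -/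
/-!
Iterating the integral inequality from `f₀ ≤ M₀` bounds `fₙ` on `[0, T]` by the `n`-th Picard
iterate `uₙ(t) = M₀ (Ct)ⁿ/n! + ∑_{k<n} αₖ (Ct)^{n-1-k}/(n-1-k)!` of `u ↦ C ∫₀ᵗ u + αₙ`.
Each `uₙ` is increasing in `t`, so `max fₙ ≤ uₙ(T)`, and `∑ₙ uₙ(T)` is `M₀ e^{CT}` plus the
Cauchy product of `∑ αₖ` with the exponential series of `CT`.
-/

open Finset
open scoped Nat

noncomputable def expTerm (C t : ℝ) (k : ℕ) : ℝ := (C * t) ^ k / k !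

noncomputable def picardIterate (M C : ℝ) (α : ℕ → ℝ) (n : ℕ) (t : ℝ) : ℝ :=
  M * expTerm C t n + ∑ k ∈ range n, α k * expTerm C t (n - 1 - k)

theorem continuous_expTerm (C : ℝ) (k : ℕ) : Continuous fun t => expTerm C t k := by
  unfold expTerm; fun_prop

theorem expTerm_succ_eq_mul_integral (C t : ℝ) (k : ℕ) :
    expTerm C t (k + 1) = C * ∫ τ in (0 : ℝ)..t, expTerm C τ k := by
  have hfun : (fun τ => expTerm C τ k) = fun τ => C ^ k / k ! * τ ^ k := by
    funext τ; rw [expTerm, mul_pow]; ring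
  rw [hfun, intervalIntegral.integral_const_mul, integral_pow, expTerm, Nat.factorial_succ]
  push_cast
  field_simp
  ring

theorem expTerm_monotoneOn {C : ℝ} (hC : 0 ≤ C) (k : ℕ) :
    MonotoneOn (fun t => expTerm C t k) (Set.Ici 0) := by
  intro s hs t _ hst
  dsimp only [expTerm]
  gcongr
  exact mul_nonneg hC hs

theorem hasSum_expTerm (C t : ℝ) : HasSum (expTerm C t) (Real.exp (C * t)) := by
  rw [Real.exp_eq_exp_ℝ]
  exact NormedSpace.expSeries_div_hasSum_exp (C * t)

section picardIterate

variable {M C : ℝ} {α : ℕ → ℝ}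

theorem continuous_picardIterate (n : ℕ) : Continuous (picardIterate M C α n) := by
  unfold picardIterate expTerm; fun_prop

theorem picardIterate_zero (t : ℝ) : picardIterate M C α 0 t = M := by
  simp [picardIterate, expTerm]

theorem picardIterate_succ (n : ℕ) (t : ℝ) :
    picardIterate M C α (n + 1) t = C * (∫ τ in (0 : ℝ)..t, picardIterate M C α n τ) + α n := by
  have hint : ∀ k, IntervalIntegrable (fun τ => expTerm C τ k) MeasureTheory.volume 0 t :=
    fun k => (continuous_expTerm C k).intervalIntegrable 0 t
  simp only [picardIterate]
  have hsum_cont : Continuous fun τ => ∑ k ∈ range n, α k * expTerm C τ (n - 1 - k) :=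
    continuous_finsetSum _ fun k _ => (continuous_expTerm C _).const_mul _
  rw [intervalIntegral.integral_add ((hint n).const_mul M) (hsum_cont.intervalIntegrable 0 t),
    intervalIntegral.integral_finsetSum fun k _ => (hint _).const_mul _]
  simp only [intervalIntegral.integral_const_mul, mul_add, mul_sum, mul_left_comm C,
    ← expTerm_succ_eq_mul_integral, sum_range_succ, Nat.add_sub_cancel, Nat.sub_self]
  have hexp_zero : expTerm C t 0 = 1 := by simp [expTerm]
  rw [hexp_zero, mul_one, ← add_assoc]
  congr 2
  refine sum_congr rfl fun k hk => ?_
  rw [show n - 1 - k + 1 = n - k by have := mem_range.mp hk; omega]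

theorem picardIterate_monotoneOn (hM : 0 ≤ M) (hC : 0 ≤ C) (hα : ∀ k, 0 ≤ α k) (n : ℕ) :
    MonotoneOn (picardIterate M C α n) (Set.Ici 0) := by
  intro s hs t ht hst
  have hterm := fun k => expTerm_monotoneOn hC k hs ht hst
  simp only [picardIterate]
  exact add_le_add (mul_le_mul_of_nonneg_left (hterm n) hM)
    (sum_le_sum fun k _ => mul_le_mul_of_nonneg_left (hterm _) (hα k))

theorem hasSum_picardIterate (hα : Summable α) (t : ℝ) :
    HasSum (fun n => picardIterate M C α n t)
      (M * Real.exp (C * t) + Real.exp (C * t) * ∑' k, α k) := by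
  have hexp := hasSum_expTerm C t
  have hα_norm : Summable fun k => ‖α k‖ := summable_norm_iff.mpr hα
  have hexp_norm : Summable fun k => ‖expTerm C t k‖ := summable_norm_iff.mpr hexp.summable
  have hcauchy := hasSum_sum_range_mul_of_summable_norm hα_norm hexp_norm
  rw [hexp.tsum_eq] at hcauchy
  have hconv : HasSum (fun n => ∑ k ∈ range n, α k * expTerm C t (n - 1 - k))
      ((∑' k, α k) * Real.exp (C * t)) :=
    (hasSum_nat_add_iff' 1).mp (by
      simp only [range_one, sum_singleton, range_zero, sum_empty, sub_zero, Nat.add_sub_cancel]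
      exact hcauchy)
  rw [mul_comm (Real.exp _)]
  exact (hexp.mul_left M).add hconv

end picardIterate

theorem le_picardIterate {T M C : ℝ} {f : ℕ → ℝ → ℝ} {α : ℕ → ℝ} (hC : 0 ≤ C)
    (hcont : ∀ n, ContinuousOn (f n) (Set.Icc 0 T))
    (hrec : ∀ n, ∀ t ∈ Set.Icc (0 : ℝ) T,
      f (n + 1) t ≤ C * (∫ τ in (0 : ℝ)..t, f n τ) + α n)
    (hM : ∀ t ∈ Set.Icc (0 : ℝ) T, f 0 t ≤ M) (n : ℕ) :
    ∀ t ∈ Set.Icc (0 : ℝ) T, f n t ≤ picardIterate M C α n t := by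
  induction n with
  | zero => simpa only [picardIterate_zero] using hM
  | succ n ih =>
    rintro t ⟨ht0, htT⟩
    have hsub : Set.uIcc 0 t ⊆ Set.Icc 0 T := by
      rw [Set.uIcc_of_le ht0]
      exact Set.Icc_subset_Icc le_rfl htT
    have hint : ∫ τ in (0 : ℝ)..t, f n τ ≤ ∫ τ in (0 : ℝ)..t, picardIterate M C α n τ :=
      intervalIntegral.integral_mono_on ht0 ((hcont n).mono hsub).intervalIntegrable
        ((continuous_picardIterate n).intervalIntegrable 0 t)
        fun τ hτ => ih τ (hsub (Set.Icc_subset_uIcc hτ))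
    rw [picardIterate_succ]
    exact (hrec n t ⟨ht0, htT⟩).trans (by gcongr)

/-- The summed bound concluding the proof of Lemma 4.3 of the paper:
`∑ₙ max_{[0,T]} f_n ≤ M₀ e^{CT} + e^{CT} ∑ α_k`. -/
theorem summed_max_bound
    (T C : ℝ) (hT : 0 < T) (hC : 0 ≤ C)
    (f : ℕ → ℝ → ℝ) (α : ℕ → ℝ)
    (hcont : ∀ n, ContinuousOn (f n) (Set.Icc 0 T))
    (hnonneg : ∀ n, ∀ t ∈ Set.Icc (0 : ℝ) T, 0 ≤ f n t)
    (hα : ∀ n, 0 ≤ α n) (hαsum : Summable α)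
    (hrec : ∀ n, ∀ t ∈ Set.Icc (0 : ℝ) T,
      f (n + 1) t ≤ C * (∫ τ in (0 : ℝ)..t, f n τ) + α n) :
    Summable (fun n => sSup ((f n) '' Set.Icc 0 T)) ∧
    (∑' n : ℕ, sSup ((f n) '' Set.Icc 0 T))
      ≤ sSup ((f 0) '' Set.Icc 0 T) * Real.exp (C * T)
        + Real.exp (C * T) * ∑' k : ℕ, α k := by
  set M := sSup ((f 0) '' Set.Icc 0 T)
  have hzero_mem : (0 : ℝ) ∈ Set.Icc 0 T := ⟨le_rfl, hT.le⟩
  have hle_sSup : ∀ n, ∀ t ∈ Set.Icc 0 T, f n t ≤ sSup ((f n) '' Set.Icc 0 T) := fun n t ht =>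
    le_csSup (isCompact_Icc.bddAbove_image (hcont n)) (Set.mem_image_of_mem _ ht)
  have hsSup_nonneg : ∀ n, 0 ≤ sSup ((f n) '' Set.Icc 0 T) := fun n =>
    (hnonneg n 0 hzero_mem).trans (hle_sSup n 0 hzero_mem)
  have hsSup_le : ∀ n, sSup ((f n) '' Set.Icc 0 T) ≤ picardIterate M C α n T := fun n =>
    csSup_le ((Set.nonempty_Icc.mpr hT.le).image _) <| Set.forall_mem_image.mpr fun t ht =>
      (le_picardIterate hC hcont hrec (hle_sSup 0) n t ht).trans
        (picardIterate_monotoneOn (hsSup_nonneg 0) hC hα n ht.1 hT.le ht.2)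
  have hsum := hasSum_picardIterate (M := M) (C := C) hαsum T
  have hsummable := Summable.of_nonneg_of_le hsSup_nonneg hsSup_le hsum.summable
  exact ⟨hsummable, (hsummable.tsum_le_tsum hsSup_le hsum.summable).trans_eq hsum.tsum_eq⟩
end
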